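/- For every integer t ≥ 3, (6t)^{1/3} − 1 ≤ Λ(t) < (6t)^{1/3} + 3. -/

import Mathlib

/-!
Upper bound. For positive semidefinite `M` and every `ζ`, `λ₊(M) ⟨ζ, M ζ⟩ ≤ ‖M ζ‖²`. For
`M = δ₁ᵀ δ₁` and `ζ` the indicator of an edge `e` this reads `λ · deg e ≤ ‖M 1ₑ‖² ≤ (deg e)² +
2 deg e`, where `deg e` is the number of triangles through `e`; hence `λ ≤ deg e + 2`. If every
edge lies in at least `d` triangles, every vertex has at least `d + 1` neighbours and lies in at
least `d (d + 1) / 2` triangles, and there are at least `d + 2` vertices, so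
`d (d + 1) (d + 2) ≤ 6 t`. With `d` the minimal edge degree this gives `(λ - 2)³ ≤ 6 t`.

Lower bound. For the family of all triangles on `n` vertices, `δ₁ᵀ δ₁ + δ₀ δ₀ᵀ = n · 1`, where
`δ₀` is the vertex-edge coboundary, and `δ₁ δ₀ = 0`; hence `M² = n M` and `λ = n`. The choice
`n = max 3 ⌊(6 t)^{1/3}⌋` satisfies `C(n, 3) ≤ n³ / 6 ≤ t`.
-/

open Finset Matrix

/-- The sign `[T : e]` of an edge `e` in a triangle `T`. -/
noncomputable def triSign (T e : Finset ℕ) : ℝ :=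
  if e ⊆ T ∧ e.card = 2 ∧ T.card = 3 then
    if (T \ e).max = T.max ∨ (T \ e).min = T.min then 1 else -1
  else 0

/-- A triangle family: a nonempty finite set of 3-element subsets of ℕ. -/
def IsTriFam (F : Finset (Finset ℕ)) : Prop :=
  F.Nonempty ∧ ∀ T ∈ F, T.card = 3

/-- The edges of the support graph of a triangle family. -/
def edgesOf (F : Finset (Finset ℕ)) : Finset (Finset ℕ) :=
  F.biUnion fun T => T.powersetCard 2

/-- The vertices of the support graph of a triangle family. -/
def vertsOf (F : Finset (Finset ℕ)) : Finset ℕ :=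
  F.biUnion id

/-- The signed edge-triangle incidence matrix of a triangle family. -/
noncomputable def delta1 (F : Finset (Finset ℕ)) :
    Matrix {T // T ∈ F} {e // e ∈ edgesOf F} ℝ :=
  Matrix.of fun T e => triSign T.1 e.1

/-- The smallest positive eigenvalue of a matrix. -/
noncomputable def lambdaMinPos {m : Type*} [Fintype m] (M : Matrix m m ℝ) : ℝ :=
  sInf {μ : ℝ | 0 < μ ∧ ∃ v : m → ℝ, v ≠ 0 ∧ M.mulVec v = μ • v}

/-- `λ(𝒯)`: the smallest positive eigenvalue of `δ₁(𝒯)ᵀ δ₁(𝒯)`. -/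
noncomputable def lam (F : Finset (Finset ℕ)) : ℝ :=
  lambdaMinPos ((delta1 F)ᵀ * delta1 F)

/-- The neighborhood of `x` in the support graph `Γ₀(F)`. -/
def nbrs (F : Finset (Finset ℕ)) (x : ℕ) : Finset ℕ :=
  (vertsOf F).filter fun y => x ≠ y ∧ ∃ T ∈ F, x ∈ T ∧ y ∈ T

/-- `φ(t)`: the maximum of `λ(𝒯)` over triangle families with `|𝒯| = t`. -/
noncomputable def phi (t : ℕ) : ℝ :=
  sSup {r : ℝ | ∃ F : Finset (Finset ℕ), IsTriFam F ∧ F.card = t ∧ lam F = r}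

/-- `Λ(t) = max_{1 ≤ s ≤ t} φ(s)`. -/
noncomputable def Lam (t : ℕ) : ℝ :=
  sSup {r : ℝ | ∃ s : ℕ, 1 ≤ s ∧ s ≤ t ∧ phi s = r}

/-- `H(n) = min{ s ≥ 1 : φ(C(n,3)+s) > n - 1 }`. -/
noncomputable def Hfun (n : ℕ) : ℕ :=
  sInf {s : ℕ | 1 ≤ s ∧ (n : ℝ) - 1 < phi (n.choose 3 + s)}

/-- The triangle family `𝒯_{c,b}`: all 3-cliques of `K_c ∨ (b isolated vertices)`. -/
def Tcb (c b : ℕ) : Finset (Finset ℕ) :=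
  ((Finset.Icc 1 c).powersetCard 3) ∪
    (Finset.Icc (c+1) (c+b)).biUnion
      (fun i => ((Finset.Icc 1 c).powersetCard 2).image (fun p => insert i p))

section Spectral

variable {m : Type*} [Fintype m]

lemma lambdaMinPos_le {M : Matrix m m ℝ} {μ : ℝ} {v : m → ℝ} (hμ : 0 < μ) (hv : v ≠ 0)
    (hMv : M *ᵥ v = μ • v) : lambdaMinPos M ≤ μ :=
  csInf_le ⟨0, fun _ h => h.1.le⟩ ⟨hμ, v, hv, hMv⟩

/-- In an eigenbasis of `M` the two sides are sums of `lambdaMinPos M · μ c²` and `μ² c²` over the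
eigenvalues `μ ≥ 0`; the terms with `μ = 0` vanish and the others have `lambdaMinPos M ≤ μ`. -/
lemma lambdaMinPos_mul_dotProduct_le [DecidableEq m] {M : Matrix m m ℝ} (hM : M.PosSemidef)
    (ζ : m → ℝ) : lambdaMinPos M * (ζ ⬝ᵥ M *ᵥ ζ) ≤ (M *ᵥ ζ) ⬝ᵥ (M *ᵥ ζ) := by
  set b := hM.1.eigenvectorBasis
  set μ := hM.1.eigenvalues
  have parseval (x y : m → ℝ) : x ⬝ᵥ y = ∑ i, (b i ⬝ᵥ x) * (b i ⬝ᵥ y) := by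
    have := b.sum_inner_mul_inner (WithLp.toLp 2 y) (WithLp.toLp 2 x)
    simp only [EuclideanSpace.inner_eq_star_dotProduct, star_trivial] at this
    rw [← this]
    exact sum_congr rfl fun i _ => by rw [dotProduct_comm x, mul_comm]
  have coord (i x) : b i ⬝ᵥ (M *ᵥ x) = μ i * (b i ⬝ᵥ x) := by
    rw [dotProduct_mulVec, ← mulVec_transpose, ← conjTranspose_eq_transpose_of_trivial, hM.1.eq,
      hM.1.mulVec_eigenvectorBasis, smul_dotProduct, smul_eq_mul]
  rw [parseval ζ, parseval, mul_sum]
  refine sum_le_sum fun i _ => ?_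
  simp only [coord]
  rcases (hM.eigenvalues_nonneg i).eq_or_lt with h | h
  · simp [μ, ← h]
  · have hb : (b i : m → ℝ) ≠ 0 := (WithLp.ofLp_eq_zero 2).ne.2 (b.orthonormal.ne_zero i)
    have := mul_le_mul_of_nonneg_right (lambdaMinPos_le h hb (hM.1.mulVec_eigenvectorBasis i))
      (mul_nonneg h.le (mul_self_nonneg (b i ⬝ᵥ ζ)))
    linarith

lemma lambdaMinPos_eq_of_mul_self_eq_smul {M : Matrix m m ℝ} {c : ℝ} (hc : 0 < c)
    (hMM : M * M = c • M) (hM : M ≠ 0) : lambdaMinPos M = c := by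
  obtain ⟨v, hv⟩ : ∃ v, M *ᵥ v ≠ 0 := by
    by_contra! h
    exact hM (ext_iff_mulVec.2 fun v => by simp [h v])
  suffices {μ : ℝ | 0 < μ ∧ ∃ v : m → ℝ, v ≠ 0 ∧ M *ᵥ v = μ • v} = {c} by
    rw [lambdaMinPos, this, csInf_singleton]
  refine Set.eq_singleton_iff_unique_mem.2 ⟨⟨hc, M *ᵥ v, hv, ?_⟩, ?_⟩
  · rw [mulVec_mulVec, hMM, smul_mulVec]
  · rintro μ ⟨hμ, w, hw, hMw⟩
    have : (μ * μ) • w = (c * μ) • w := by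
      rw [← smul_smul, ← smul_smul, ← hMw, ← mulVec_smul, ← hMw, ← smul_mulVec, ← hMM,
        mulVec_mulVec]
    exact mul_right_cancel₀ hμ.ne' (smul_left_injective ℝ hw this)

end Spectral

section Signs

lemma exists_lt_of_card_eq_two {e : Finset ℕ} (he : e.card = 2) : ∃ u v, u < v ∧ e = {u, v} := by
  obtain ⟨u, v, huv, rfl⟩ := card_eq_two.mp he
  rcases huv.lt_or_gt with h | h
  exacts [⟨u, v, h, rfl⟩, ⟨v, u, h, pair_comm u v⟩]

lemma exists_lt_lt_of_card_eq_three {T : Finset ℕ} (hT : T.card = 3) :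
    ∃ a b c, a < b ∧ b < c ∧ T = {a, b, c} := by
  refine ⟨T.orderEmbOfFin hT 0, T.orderEmbOfFin hT 1, T.orderEmbOfFin hT 2,
    (T.orderEmbOfFin hT).strictMono (by decide), (T.orderEmbOfFin hT).strictMono (by decide), ?_⟩
  ext x
  rw [← mem_coe, ← T.range_orderEmbOfFin hT, Set.mem_range]
  simp [Fin.exists_fin_succ, eq_comm]

lemma three_le_card_union {α : Type*} [DecidableEq α] {e f : Finset α} (he : e.card = 2)
    (hf : f.card = 2) (hef : e ≠ f) : 3 ≤ (e ∪ f).card := by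
  have hlt : e ⊂ e ∪ f := Finset.ssubset_iff_subset_ne.2 ⟨subset_union_left, fun h =>
    hef (eq_of_subset_of_card_le (h ▸ subset_union_right) (by omega)).symm⟩
  have := card_lt_card hlt
  omega

/-- Row `e` of the vertex-edge coboundary `δ₀`: `{u, v}` with `u < v` is oriented from `u` to `v`,
the convention under which `δ₁ δ₀ = 0`. -/
noncomputable def edgeSign (e : Finset ℕ) (x : ℕ) : ℝ :=
  if x ∈ e ∧ e.card = 2 then (if e.min = x then -1 else 1) else 0

lemma edgeSign_pair {u v : ℕ} (h : u < v) (x : ℕ) :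
    edgeSign {u, v} x = if x = u then -1 else if x = v then 1 else 0 := by
  simp only [edgeSign, card_pair h.ne, mem_insert, mem_singleton, and_true, min_insert,
    min_singleton, ← WithTop.coe_min, min_eq_left h.le]
  split_ifs <;> simp_all

lemma edgeSign_eq_zero_of_notMem {e : Finset ℕ} {x : ℕ} (h : x ∉ e) : edgeSign e x = 0 :=
  if_neg fun h' => h h'.1

lemma triSign_eq_zero_of_not_subset {T e : Finset ℕ} (h : ¬ e ⊆ T) : triSign T e = 0 :=
  if_neg fun h' => h h'.1

lemma triSign_mul_self {T e : Finset ℕ} (heT : e ⊆ T) (he : e.card = 2) (hT : T.card = 3) :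
    triSign T e * triSign T e = 1 := by
  rw [triSign, if_pos ⟨heT, he, hT⟩]
  split_ifs <;> norm_num

variable {a b c : ℕ}

lemma card_triple (hab : a < b) (hbc : b < c) : ({a, b, c} : Finset ℕ).card = 3 := by
  rw [card_eq_three]; exact ⟨a, b, c, hab.ne, by omega, hbc.ne, rfl⟩

lemma triSign_triple_left (hab : a < b) (hbc : b < c) : triSign {a, b, c} {a, b} = 1 := by
  have : ({a, b, c} : Finset ℕ) \ {a, b} = {c} := by ext; simp; omega
  simp [triSign, card_triple hab hbc, this, hab.ne, insert_subset_iff, hbc.le, (hab.trans hbc).le]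

lemma triSign_triple_mid (hab : a < b) (hbc : b < c) : triSign {a, b, c} {a, c} = -1 := by
  have : ({a, b, c} : Finset ℕ) \ {a, c} = {b} := by ext; simp; omega
  simp [triSign, card_triple hab hbc, this, (hab.trans hbc).ne, insert_subset_iff, hab.le, hbc.le,
    (hab.trans hbc).le, hab.ne', hbc.ne]

lemma triSign_triple_right (hab : a < b) (hbc : b < c) : triSign {a, b, c} {b, c} = 1 := by
  have : ({a, b, c} : Finset ℕ) \ {b, c} = {a} := by ext; simp; omega
  simp [triSign, card_triple hab hbc, this, hbc.ne, hab.le, hbc.le, (hab.trans hbc).le]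

lemma eq_pair_of_subset_triple (hab : a < b) (hbc : b < c) {e : Finset ℕ} (he : e.card = 2)
    (heT : e ⊆ {a, b, c}) : e = {a, b} ∨ e = {a, c} ∨ e = {b, c} := by
  obtain ⟨u, v, huv, rfl⟩ := exists_lt_of_card_eq_two he
  simp only [insert_subset_iff, singleton_subset_iff, mem_insert, mem_singleton] at heT
  obtain ⟨hu | hu | hu, hv | hv | hv⟩ := heT <;> subst hu hv <;> first | omega | simp

lemma sum_triSign_mul (hab : a < b) (hbc : b < c) {E : Finset (Finset ℕ)}
    (hE : ({a, b, c} : Finset ℕ).powersetCard 2 ⊆ E) (g : Finset ℕ → ℝ) :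
    ∑ e ∈ E, triSign {a, b, c} e * g e = g {a, b} - g {a, c} + g {b, c} := by
  have hsub : ({{a, b}, {a, c}, {b, c}} : Finset (Finset ℕ)) ⊆ E := by
    refine subset_trans ?_ hE
    simp [insert_subset_iff, mem_powersetCard, hab.ne, hbc.ne, (hab.trans hbc).ne]
  rw [← sum_subset hsub]
  · rw [sum_insert, sum_pair, triSign_triple_left hab hbc, triSign_triple_mid hab hbc,
      triSign_triple_right hab hbc]
    · ring
    · simp only [ne_eq, Finset.ext_iff, not_forall]
      exact ⟨a, by simp; omega⟩
    · simp only [mem_insert, mem_singleton, Finset.ext_iff, not_or, not_forall]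
      exact ⟨⟨b, by simp; omega⟩, a, by simp; omega⟩
  · intro e _ he
    by_cases h : e ⊆ {a, b, c} ∧ e.card = 2
    · simp only [mem_insert, mem_singleton] at he
      exact absurd (eq_pair_of_subset_triple hab hbc h.2 h.1) he
    · rw [triSign, if_neg (by tauto), zero_mul]

lemma triSign_union_mul_triSign_union {e f : Finset ℕ} (he : e.card = 2) (hf : f.card = 2)
    (hef : e ≠ f) (hU : (e ∪ f).card = 3) :
    triSign (e ∪ f) e * triSign (e ∪ f) f = -∑ x ∈ e, edgeSign e x * edgeSign f x := by
  obtain ⟨a, b, c, hab, hbc, hT⟩ := exists_lt_lt_of_card_eq_three hU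
  have hac := hab.trans hbc
  have cases (g : Finset ℕ) (hg : g.card = 2) (hgT : g ⊆ e ∪ f) :=
    eq_pair_of_subset_triple hab hbc hg (hT ▸ hgT)
  rw [hT]
  rcases cases e he subset_union_left with rfl | rfl | rfl <;>
    rcases cases f hf subset_union_right with rfl | rfl | rfl <;>
    first
    | exact absurd rfl hef
    | simp [triSign_triple_left hab hbc, triSign_triple_mid hab hbc, triSign_triple_right hab hbc,
        edgeSign_pair hab, edgeSign_pair hbc, edgeSign_pair hac, hab.ne, hbc.ne, hac.ne, hab.ne',
        hbc.ne', hac.ne']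

end Signs

def codegree (F : Finset (Finset ℕ)) (s : Finset ℕ) : ℕ := #{T ∈ F | s ⊆ T}

noncomputable def delta0 (F : Finset (Finset ℕ)) :
    Matrix {e // e ∈ edgesOf F} {x // x ∈ vertsOf F} ℝ :=
  Matrix.of fun e x => edgeSign e.1 x.1

section TriFam

variable {F : Finset (Finset ℕ)}

lemma mem_vertsOf {x : ℕ} : x ∈ vertsOf F ↔ ∃ T ∈ F, x ∈ T := by
  simp [vertsOf]

lemma subset_vertsOf {T : Finset ℕ} (hT : T ∈ F) : T ⊆ vertsOf F :=
  subset_biUnion_of_mem id hT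

lemma mem_nbrs {x y : ℕ} : y ∈ nbrs F x ↔ x ≠ y ∧ ∃ T ∈ F, x ∈ T ∧ y ∈ T := by
  rw [nbrs, mem_filter, mem_vertsOf]
  exact ⟨fun h => h.2, fun h => ⟨let ⟨T, hT, _, hy⟩ := h.2; ⟨T, hT, hy⟩, h⟩⟩

lemma mem_edgesOf {e : Finset ℕ} : e ∈ edgesOf F ↔ e.card = 2 ∧ ∃ T ∈ F, e ⊆ T := by
  simp only [edgesOf, mem_biUnion, mem_powersetCard]
  exact ⟨fun ⟨T, hT, heT, he⟩ => ⟨he, T, hT, heT⟩, fun ⟨he, T, hT, heT⟩ => ⟨T, hT, heT, he⟩⟩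

lemma pair_mem_edgesOf {T : Finset ℕ} {x y : ℕ} (hT : T ∈ F) (hx : x ∈ T) (hy : y ∈ T)
    (hxy : x ≠ y) : ({x, y} : Finset ℕ) ∈ edgesOf F :=
  mem_edgesOf.2 ⟨card_pair hxy, T, hT, insert_subset hx (singleton_subset_iff.2 hy)⟩

lemma edgesOf_nonempty (hF : IsTriFam F) : (edgesOf F).Nonempty :=
  let ⟨T, hT⟩ := hF.1
  (powersetCard_nonempty.2 (by rw [hF.2 T hT]; norm_num)).mono (subset_biUnion_of_mem _ hT)

lemma one_le_codegree {e : Finset ℕ} (he : e ∈ edgesOf F) : 1 ≤ codegree F e :=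
  let ⟨_, T, hT, heT⟩ := mem_edgesOf.1 he
  card_pos.2 ⟨T, mem_filter.2 ⟨hT, heT⟩⟩

lemma sum_codegree_singleton (hF : ∀ T ∈ F, T.card = 3) :
    ∑ x ∈ vertsOf F, codegree F {x} = 3 * F.card := by
  have := sum_card_bipartiteAbove_eq_sum_card_bipartiteBelow (s := vertsOf F) (t := F)
    (r := fun x T => x ∈ T)
  simp only [bipartiteAbove, bipartiteBelow] at this
  rw [card_eq_sum_ones F, mul_sum]
  simp only [codegree, singleton_subset_iff, this, mul_one]
  refine sum_congr rfl fun T hT => ?_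
  rw [filter_mem_eq_inter, inter_eq_right.2 (subset_vertsOf hT), hF T hT]

lemma two_mul_codegree_singleton (hF : ∀ T ∈ F, T.card = 3) (x : ℕ) :
    2 * codegree F {x} = ∑ y ∈ nbrs F x, codegree F {x, y} := by
  have := sum_card_bipartiteAbove_eq_sum_card_bipartiteBelow (s := nbrs F x)
    (t := {T ∈ F | x ∈ T}) (r := fun y T => y ∈ T)
  simp only [bipartiteAbove, bipartiteBelow, filter_filter] at this
  simp only [codegree, insert_subset_iff, singleton_subset_iff, this,
    card_eq_sum_ones {T ∈ F | x ∈ T}, mul_sum]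
  refine sum_congr rfl fun T hT => ?_
  obtain ⟨hTF, hxT⟩ := mem_filter.1 hT
  have : {y ∈ nbrs F x | y ∈ T} = T.erase x := by
    ext y
    simp only [mem_filter, mem_erase, mem_nbrs]
    exact ⟨fun h => ⟨h.1.1.symm, h.2⟩, fun h => ⟨⟨Ne.symm h.1, T, hTF, hxT, h.2⟩, h.2⟩⟩
  simp [this, card_erase_of_mem hxT, hF T hTF]

lemma codegree_pair_le_card_nbrs_sub_one (hF : ∀ T ∈ F, T.card = 3) {x y : ℕ}
    (hy : y ∈ nbrs F x) : codegree F {x, y} ≤ #(nbrs F x) - 1 := by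
  have hxy := (mem_nbrs.1 hy).1
  rw [← card_erase_of_mem hy]
  refine (card_le_card fun T hT => ?_).trans (card_image_le (f := fun z => insert z {x, y}))
  obtain ⟨hTF, hxyT⟩ := mem_filter.1 hT
  obtain ⟨z, hz⟩ := card_eq_one.1 (show #(T \ {x, y}) = 1 by
    rw [card_sdiff_of_subset hxyT, hF T hTF, card_pair hxy])
  have hzT : z ∈ T \ {x, y} := hz ▸ mem_singleton_self z
  simp only [mem_sdiff, mem_insert, mem_singleton, not_or] at hzT
  refine mem_image.2 ⟨z, mem_erase.2 ⟨hzT.2.2, mem_nbrs.2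
    ⟨Ne.symm hzT.2.1, T, hTF, hxyT (mem_insert_self x {y}), hzT.1⟩⟩, ?_⟩
  rw [← sdiff_union_of_subset hxyT, hz, insert_eq]

lemma add_one_le_card_nbrs (hF : IsTriFam F) {d : ℕ} (hd : ∀ e ∈ edgesOf F, d ≤ codegree F e)
    {x : ℕ} (hx : x ∈ vertsOf F) : d + 1 ≤ #(nbrs F x) := by
  obtain ⟨T, hT, hxT⟩ := mem_vertsOf.1 hx
  obtain ⟨y, hy⟩ : (T.erase x).Nonempty := by
    rw [← card_pos, card_erase_of_mem hxT, hF.2 T hT]; norm_num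
  obtain ⟨hyx, hyT⟩ := mem_erase.1 hy
  have hyN : y ∈ nbrs F x := mem_nbrs.2 ⟨hyx.symm, T, hT, hxT, hyT⟩
  have := (hd _ (pair_mem_edgesOf hT hxT hyT hyx.symm)).trans
    (codegree_pair_le_card_nbrs_sub_one hF.2 hyN)
  have := card_pos.2 ⟨y, hyN⟩
  omega

lemma mul_add_one_mul_add_two_le_six_mul_card (hF : IsTriFam F) {d : ℕ}
    (hd : ∀ e ∈ edgesOf F, d ≤ codegree F e) : d * (d + 1) * (d + 2) ≤ 6 * F.card := by
  have hx : ∀ x ∈ vertsOf F, d * (d + 1) ≤ 2 * codegree F {x} := fun x hx => by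
    rw [two_mul_codegree_singleton hF.2]
    calc d * (d + 1) ≤ #(nbrs F x) * d := by
          rw [mul_comm]; exact Nat.mul_le_mul_right d (add_one_le_card_nbrs hF hd hx)
      _ ≤ _ := card_nsmul_le_sum _ _ _ fun y hy =>
          let ⟨hxy, T, hT, hxT, hyT⟩ := mem_nbrs.1 hy; hd _ (pair_mem_edgesOf hT hxT hyT hxy)
  have hV : d + 2 ≤ #(vertsOf F) := by
    obtain ⟨T, hT⟩ := hF.1
    obtain ⟨x, hxT⟩ : T.Nonempty := by rw [← card_pos, hF.2 T hT]; norm_num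
    have hxV := subset_vertsOf hT hxT
    have := card_le_card (insert_subset hxV (filter_subset _ _) : insert x (nbrs F x) ⊆ _)
    rw [card_insert_of_notMem fun h => (mem_nbrs.1 h).1 rfl] at this
    have := add_one_le_card_nbrs hF hd hxV
    omega
  calc d * (d + 1) * (d + 2) ≤ #(vertsOf F) * (d * (d + 1)) := by
        rw [mul_comm]; exact Nat.mul_le_mul_right _ hV
    _ ≤ ∑ x ∈ vertsOf F, 2 * codegree F {x} := by
        rw [← smul_eq_mul, ← sum_const]; exact sum_le_sum hx
    _ = 6 * F.card := by rw [← mul_sum, sum_codegree_singleton hF.2]; ring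

lemma delta1_transpose_mul_apply (e f : {e // e ∈ edgesOf F}) :
    ((delta1 F)ᵀ * delta1 F) e f = ∑ T ∈ F, triSign T e * triSign T f := by
  simp only [mul_apply, transpose_apply, delta1, of_apply]
  exact sum_coe_sort F fun T => triSign T e * triSign T f

lemma sum_triSign_mul_self (hF : ∀ T ∈ F, T.card = 3) {e : Finset ℕ} (he : e.card = 2) :
    ∑ T ∈ F, triSign T e * triSign T e = codegree F e := by
  rw [codegree, card_filter, Nat.cast_sum]
  refine sum_congr rfl fun T hT => ?_
  by_cases heT : e ⊆ T
  · simp [heT, triSign_mul_self heT he (hF T hT)]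
  · simp [heT, triSign_eq_zero_of_not_subset heT]

lemma sum_triSign_mul_triSign (hF : ∀ T ∈ F, T.card = 3) {e f : Finset ℕ} (he : e.card = 2)
    (hf : f.card = 2) (hef : e ≠ f) :
    ∑ T ∈ F, triSign T e * triSign T f =
      if e ∪ f ∈ F then triSign (e ∪ f) e * triSign (e ∪ f) f else 0 := by
  have hzero : ∀ T ∈ F, T ≠ e ∪ f → triSign T e * triSign T f = 0 := fun T hT hTef => by
    by_cases heT : e ⊆ T
    · by_cases hfT : f ⊆ T
      · refine absurd (eq_of_subset_of_card_le (union_subset heT hfT) ?_).symm hTef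
        rw [hF T hT]; exact three_le_card_union he hf hef
      · rw [triSign_eq_zero_of_not_subset hfT, mul_zero]
    · rw [triSign_eq_zero_of_not_subset heT, zero_mul]
  split_ifs with h
  · exact sum_eq_single_of_mem _ h hzero
  · exact sum_eq_zero fun T hT => hzero T hT fun h' => h (h' ▸ hT)

lemma delta1_transpose_mul_self_ne_zero (hF : IsTriFam F) : (delta1 F)ᵀ * delta1 F ≠ 0 := by
  obtain ⟨e, he⟩ := edgesOf_nonempty hF
  intro h
  have := congrFun (congrFun h ⟨e, he⟩) ⟨e, he⟩
  rw [delta1_transpose_mul_apply, sum_triSign_mul_self hF.2 (mem_edgesOf.1 he).1,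
    Matrix.zero_apply, Nat.cast_eq_zero] at this
  exact Nat.one_le_iff_ne_zero.1 (one_le_codegree he) this

lemma delta0_mul_transpose_apply (e f : {e // e ∈ edgesOf F}) :
    (delta0 F * (delta0 F)ᵀ) e f = ∑ x ∈ e.1, edgeSign e x * edgeSign f x := by
  simp only [mul_apply, transpose_apply, delta0, of_apply]
  rw [sum_coe_sort (vertsOf F) fun x => edgeSign e x * edgeSign f x]
  obtain ⟨-, T, hT, heT⟩ := mem_edgesOf.1 e.2
  refine (sum_subset (heT.trans (subset_vertsOf hT)) fun x _ hx => ?_).symm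
  rw [edgeSign_eq_zero_of_notMem hx, zero_mul]

lemma delta1_mul_delta0 : delta1 F * delta0 F = 0 := by
  ext T x
  simp only [mul_apply, delta1, delta0, of_apply, Matrix.zero_apply]
  rw [sum_coe_sort (edgesOf F) fun e => triSign T e * edgeSign e x]
  by_cases hT : T.1.card = 3
  · obtain ⟨a, b, c, hab, hbc, hT'⟩ := exists_lt_lt_of_card_eq_three hT
    have hE : T.1.powersetCard 2 ⊆ edgesOf F := subset_biUnion_of_mem _ T.2
    rw [hT'] at hE ⊢
    rw [sum_triSign_mul hab hbc hE, edgeSign_pair hab, edgeSign_pair hbc,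
      edgeSign_pair (hab.trans hbc)]
    split_ifs <;> first | (exfalso; omega) | norm_num
  · simp [triSign, hT]

/-- Off the diagonal, the column of `e` is `± 1` exactly at the two other edges of each triangle
through `e`. -/
lemma sum_sq_delta1_transpose_mul_apply_le (hF : ∀ T ∈ F, T.card = 3)
    (e : {e // e ∈ edgesOf F}) :
    ∑ f, ((delta1 F)ᵀ * delta1 F) f e ^ 2 ≤ (codegree F e : ℝ) ^ 2 + 2 * codegree F e := by
  have he := (mem_edgesOf.1 e.2).1
  set U := {f ∈ (edgesOf F).erase e | f ∪ e.1 ∈ F}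
  have hUcard : #U ≤ 2 * codegree F e := by
    have hsub : U ⊆ {T ∈ F | e.1 ⊆ T}.biUnion fun T => (T.powersetCard 2).erase e :=
      fun f hf => by
        obtain ⟨hfE, hfeF⟩ := mem_filter.1 hf
        exact mem_biUnion.2 ⟨f ∪ e, mem_filter.2 ⟨hfeF, subset_union_right⟩,
          mem_erase.2 ⟨(mem_erase.1 hfE).1, mem_powersetCard.2
            ⟨subset_union_left, (mem_edgesOf.1 (mem_erase.1 hfE).2).1⟩⟩⟩
    refine (card_le_card hsub).trans (card_biUnion_le.trans (le_of_eq ?_))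
    rw [codegree, mul_comm, ← smul_eq_mul, ← sum_const]
    refine sum_congr rfl fun T hT => ?_
    obtain ⟨hTF, heT⟩ := mem_filter.1 hT
    rw [card_erase_of_mem (mem_powersetCard.2 ⟨heT, he⟩), card_powersetCard, hF T hTF]
    rfl
  have hoff : ∀ f ∈ (edgesOf F).erase e,
      (∑ T ∈ F, triSign T f * triSign T e) ^ 2 = if f ∪ e.1 ∈ F then 1 else 0 := fun f hf => by
    obtain ⟨hfe, hfE⟩ := mem_erase.1 hf
    have hf2 := (mem_edgesOf.1 hfE).1
    rw [sum_triSign_mul_triSign hF hf2 he hfe]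
    split_ifs with hfeF
    · rw [mul_pow, sq, sq, triSign_mul_self subset_union_left hf2 (hF _ hfeF),
        triSign_mul_self subset_union_right he (hF _ hfeF), one_mul]
    · rw [sq, zero_mul]
  simp only [delta1_transpose_mul_apply]
  rw [sum_coe_sort (edgesOf F) fun f => (∑ T ∈ F, triSign T f * triSign T e) ^ 2,
    ← add_sum_erase _ _ e.2, sum_congr rfl hoff, sum_boole, sum_triSign_mul_self hF he]
  have : (#U : ℝ) ≤ 2 * codegree F e := by exact_mod_cast hUcard
  linarith

lemma lam_le_codegree_add_two (hF : IsTriFam F) {e : Finset ℕ} (he : e ∈ edgesOf F) :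
    lam F ≤ codegree F e + 2 := by
  have hM : ((delta1 F)ᵀ * delta1 F).PosSemidef := by
    simpa using posSemidef_conjTranspose_mul_self (delta1 F)
  have key := lambdaMinPos_mul_dotProduct_le hM (Pi.single ⟨e, he⟩ 1)
  rw [mulVec_single_one, single_one_dotProduct, col_apply, delta1_transpose_mul_apply,
    sum_triSign_mul_self hF.2 (mem_edgesOf.1 he).1] at key
  simp only [dotProduct, col_apply, ← sq] at key
  have hsq := sum_sq_delta1_transpose_mul_apply_le hF.2 ⟨e, he⟩
  have hd : (1 : ℝ) ≤ codegree F e := by exact_mod_cast one_le_codegree he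
  rw [lam]
  nlinarith

end TriFam

lemma rpow_one_third_pow {y : ℝ} (hy : 0 ≤ y) : (y ^ (1 / 3 : ℝ)) ^ 3 = y := by
  rw [one_div]; exact_mod_cast Real.rpow_inv_natCast_pow hy three_ne_zero

lemma lam_le_rpow_add_two {F : Finset (Finset ℕ)} (hF : IsTriFam F) :
    lam F ≤ (6 * (F.card : ℝ)) ^ (1 / 3 : ℝ) + 2 := by
  obtain ⟨e, he, hmin⟩ := (edgesOf F).exists_min_image (codegree F) (edgesOf_nonempty hF)
  set d := codegree F e
  have hcube : (d : ℝ) ^ 3 ≤ 6 * F.card :=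
    calc (d : ℝ) ^ 3 ≤ d * (d + 1) * (d + 2) := by nlinarith [d.cast_nonneg (α := ℝ)]
      _ ≤ 6 * F.card := by exact_mod_cast mul_add_one_mul_add_two_le_six_mul_card hF hmin
  have : (d : ℝ) ≤ (6 * (F.card : ℝ)) ^ (1 / 3 : ℝ) := by
    rwa [← pow_le_pow_iff_left₀ d.cast_nonneg (by positivity) three_ne_zero,
      rpow_one_third_pow (by positivity)]
  linarith [lam_le_codegree_add_two hF he]

def completeTriFam (n : ℕ) : Finset (Finset ℕ) := (range n).powersetCard 3

section CompleteTriFam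

variable {n : ℕ}

lemma mem_completeTriFam {T : Finset ℕ} : T ∈ completeTriFam n ↔ T ⊆ range n ∧ T.card = 3 :=
  mem_powersetCard

lemma isTriFam_completeTriFam (hn : 3 ≤ n) : IsTriFam (completeTriFam n) :=
  ⟨powersetCard_nonempty.2 (by simpa using hn), fun _ hT => (mem_completeTriFam.1 hT).2⟩

lemma card_completeTriFam : (completeTriFam n).card = n.choose 3 := by
  simp [completeTriFam]

lemma subset_range_of_mem_edgesOf_completeTriFam {e : Finset ℕ}
    (he : e ∈ edgesOf (completeTriFam n)) : e ⊆ range n :=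
  let ⟨_, _, hT, heT⟩ := mem_edgesOf.1 he
  heT.trans (mem_completeTriFam.1 hT).1

lemma codegree_completeTriFam {e : Finset ℕ} (he : e ⊆ range n) (he2 : e.card = 2) :
    codegree (completeTriFam n) e = n - 2 := by
  rw [codegree, completeTriFam, card_filter_powersetCard_subset _ _ _ he (by omega),
    card_range, he2, Nat.choose_one_right]

lemma sum_edgeSign_mul_self {e : Finset ℕ} (he : e.card = 2) :
    ∑ x ∈ e, edgeSign e x * edgeSign e x = 2 := by
  obtain ⟨u, v, huv, rfl⟩ := exists_lt_of_card_eq_two he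
  simp [edgeSign_pair huv, huv.ne, huv.ne']
  norm_num

lemma delta1_transpose_mul_completeTriFam (hn : 3 ≤ n) :
    (delta1 (completeTriFam n))ᵀ * delta1 (completeTriFam n) =
      (n : ℝ) • 1 - delta0 (completeTriFam n) * (delta0 (completeTriFam n))ᵀ := by
  ext e f
  rw [delta1_transpose_mul_apply, Matrix.sub_apply, Matrix.smul_apply, Matrix.one_apply,
    delta0_mul_transpose_apply]
  have he := (mem_edgesOf.1 e.2).1
  have hf := (mem_edgesOf.1 f.2).1
  have heS := subset_range_of_mem_edgesOf_completeTriFam e.2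
  have hF := (isTriFam_completeTriFam hn).2
  by_cases hef : e = f
  · subst hef
    rw [sum_triSign_mul_self hF he, codegree_completeTriFam heS he, sum_edgeSign_mul_self he,
      if_pos rfl, Nat.cast_sub (by omega)]
    norm_num
  have hef' : e.1 ≠ f.1 := Subtype.coe_ne_coe.2 hef
  rw [sum_triSign_mul_triSign hF he hf hef', if_neg hef, smul_zero, zero_sub]
  by_cases hU : (e.1 ∪ f).card = 3
  · rw [if_pos (mem_completeTriFam.2 ⟨union_subset heS
      (subset_range_of_mem_edgesOf_completeTriFam f.2), hU⟩),
      triSign_union_mul_triSign_union he hf hef' hU]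
  · rw [if_neg fun h => hU (mem_completeTriFam.1 h).2, zero_eq_neg]
    refine sum_eq_zero fun x hx => ?_
    have hxf : x ∉ f.1 := fun hxf => by
      have := card_union_add_card_inter e.1 f.1
      have := card_pos.2 ⟨x, mem_inter.2 ⟨hx, hxf⟩⟩
      have := three_le_card_union he hf hef'
      omega
    rw [edgeSign_eq_zero_of_notMem hxf, mul_zero]

lemma delta1_transpose_mul_self_completeTriFam (hn : 3 ≤ n) :
    ((delta1 (completeTriFam n))ᵀ * delta1 (completeTriFam n)) *
      ((delta1 (completeTriFam n))ᵀ * delta1 (completeTriFam n)) =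
      (n : ℝ) • ((delta1 (completeTriFam n))ᵀ * delta1 (completeTriFam n)) := by
  set δ₁ := delta1 (completeTriFam n)
  set δ₀ := delta0 (completeTriFam n)
  have hδ : δ₁ᵀ * δ₁ * (δ₀ * δ₀ᵀ) = 0 := by
    rw [Matrix.mul_assoc, ← Matrix.mul_assoc δ₁, delta1_mul_delta0, Matrix.zero_mul,
      Matrix.mul_zero]
  calc δ₁ᵀ * δ₁ * (δ₁ᵀ * δ₁) = δ₁ᵀ * δ₁ * ((n : ℝ) • 1 - δ₀ * δ₀ᵀ) :=
        congrArg _ (delta1_transpose_mul_completeTriFam hn)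
    _ = (n : ℝ) • (δ₁ᵀ * δ₁) := by
        rw [Matrix.mul_sub, hδ, Matrix.mul_smul, Matrix.mul_one, sub_zero]

lemma lam_completeTriFam (hn : 3 ≤ n) : lam (completeTriFam n) = n :=
  lambdaMinPos_eq_of_mul_self_eq_smul (by positivity) (delta1_transpose_mul_self_completeTriFam hn)
    (delta1_transpose_mul_self_ne_zero (isTriFam_completeTriFam hn))

end CompleteTriFam

lemma phi_le_rpow_add_two (s : ℕ) : phi s ≤ (6 * (s : ℝ)) ^ (1 / 3 : ℝ) + 2 :=
  Real.sSup_le (fun _ ⟨_, hF, hs, hr⟩ => hr ▸ hs ▸ lam_le_rpow_add_two hF) (by positivity)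

lemma phi_le_rpow_add_two_of_le {s t : ℕ} (hst : s ≤ t) :
    phi s ≤ (6 * (t : ℝ)) ^ (1 / 3 : ℝ) + 2 :=
  (phi_le_rpow_add_two s).trans (by gcongr)

lemma lam_le_phi {F : Finset (Finset ℕ)} (hF : IsTriFam F) : lam F ≤ phi F.card :=
  le_csSup ⟨_, fun _ ⟨_, hG, hs, hr⟩ => hr ▸ hs ▸ lam_le_rpow_add_two hG⟩ ⟨F, hF, rfl, rfl⟩

lemma phi_le_Lam {s t : ℕ} (hs : 1 ≤ s) (hst : s ≤ t) : phi s ≤ Lam t :=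
  le_csSup ⟨_, fun _ ⟨_, _, hs't, hr⟩ => hr ▸ phi_le_rpow_add_two_of_le hs't⟩ ⟨s, hs, hst, rfl⟩

lemma Lam_le_rpow_add_two (t : ℕ) : Lam t ≤ (6 * (t : ℝ)) ^ (1 / 3 : ℝ) + 2 :=
  Real.sSup_le (fun _ ⟨_, _, hst, hr⟩ => hr ▸ phi_le_rpow_add_two_of_le hst) (by positivity)

lemma natCast_le_Lam {n t : ℕ} (hn : 3 ≤ n) (ht : n.choose 3 ≤ t) : (n : ℝ) ≤ Lam t :=
  calc (n : ℝ) = lam (completeTriFam n) := (lam_completeTriFam hn).symm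
    _ ≤ phi (n.choose 3) := card_completeTriFam (n := n) ▸ lam_le_phi (isTriFam_completeTriFam hn)
    _ ≤ Lam t := phi_le_Lam (Nat.choose_pos hn) ht

lemma choose_three_floor_rpow_le (t : ℕ) : (⌊(6 * (t : ℝ)) ^ (1 / 3 : ℝ)⌋₊).choose 3 ≤ t := by
  set x := (6 * (t : ℝ)) ^ (1 / 3 : ℝ)
  have : ((⌊x⌋₊.choose 3 : ℕ) : ℝ) ≤ t :=
    calc ((⌊x⌋₊.choose 3 : ℕ) : ℝ) ≤ (⌊x⌋₊ : ℝ) ^ 3 / 6 :=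
          (Nat.choose_le_pow_div 3 _).trans_eq (by norm_num [Nat.factorial])
      _ ≤ x ^ 3 / 6 := by gcongr; exact Nat.floor_le (by positivity)
      _ = t := by rw [rpow_one_third_pow (by positivity)]; ring
  exact_mod_cast this

/-- For every `t ≥ 3`, `(6t)^{1/3} - 1 ≤ Λ(t) < (6t)^{1/3} + 3`. -/
theorem stmt9 (t : ℕ) (ht : 3 ≤ t) :
    (6 * (t : ℝ)) ^ ((1 : ℝ) / 3) - 1 ≤ Lam t ∧
    Lam t < (6 * (t : ℝ)) ^ ((1 : ℝ) / 3) + 3 := by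
  set x := (6 * (t : ℝ)) ^ ((1 : ℝ) / 3)
  refine ⟨?_, (Lam_le_rpow_add_two t).trans_lt (by linarith)⟩
  have hchoose : (max 3 ⌊x⌋₊).choose 3 ≤ t := by
    rcases max_choice 3 ⌊x⌋₊ with h | h <;> rw [h]
    · simpa using ht.trans' (by norm_num)
    · exact choose_three_floor_rpow_le t
  have hn := natCast_le_Lam (le_max_left _ _) hchoose
  have : (⌊x⌋₊ : ℝ) ≤ (max 3 ⌊x⌋₊ : ℕ) := by exact_mod_cast le_max_right _ _
  linarith [Nat.lt_floor_add_one x]
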